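/- arXiv:1708.05114 — 7 statements merged into one kernel-verified Lean document; each statement's English description precedes it below -/
import Mathlib

section
/- Let η_c, η_d ∈ (0,1], let p⁺ ≥ 0 and p⁻ ≤ 0, and let x ∈ ℝ. Then there exist P_c, P_d ∈ ℝ satisfying 0 ≤ P_c ≤ p⁺, p⁻ ≤ P_d ≤ 0, P_c·P_d = 0 (charging and discharging do not occur simultaneously), and x = P_c/η_c + η_d·P_d, if and only if η_d·p⁻ ≤ x ≤ p⁺/η_c. -/
/-!
Since `P_c / η_c ∈ [0, p⁺/η_c]` and `η_d P_d ∈ [η_d p⁻, 0]`, every admissible split lands in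
`[η_d p⁻, p⁺/η_c]`. Conversely, `x` is realised by routing its positive part `max x 0` through
the charger and its negative part `min x 0` through the discharger; these never overlap since
`max x 0 * min x 0 = x * 0`.
-/

theorem div_add_mul_mem_Icc {ηc ηd pplus pminus Pc Pd : ℝ} (hηc : 0 < ηc) (hηd : 0 < ηd)
    (hPc : Pc ∈ Set.Icc 0 pplus) (hPd : Pd ∈ Set.Icc pminus 0) :
    Pc / ηc + ηd * Pd ∈ Set.Icc (ηd * pminus) (pplus / ηc) := by
  have hc : Pc / ηc ∈ Set.Icc 0 (pplus / ηc) :=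
    ⟨div_nonneg hPc.1 hηc.le, div_le_div_of_nonneg_right hPc.2 hηc.le⟩
  have hd : ηd * Pd ∈ Set.Icc (ηd * pminus) 0 :=
    ⟨mul_le_mul_of_nonneg_left hPd.1 hηd.le, mul_nonpos_of_nonneg_of_nonpos hηd.le hPd.2⟩
  constructor <;> linarith [hc.1, hc.2, hd.1, hd.2]

theorem mul_max_zero_mem_Icc {ηc pplus x : ℝ} (hηc : 0 < ηc) (hpplus : 0 ≤ pplus)
    (hx : x ≤ pplus / ηc) : ηc * max x 0 ∈ Set.Icc 0 pplus := by
  refine ⟨by positivity, ?_⟩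
  rw [← le_div_iff₀' hηc]
  exact max_le hx (div_nonneg hpplus hηc.le)

theorem min_zero_div_mem_Icc {ηd pminus x : ℝ} (hηd : 0 < ηd) (hpminus : pminus ≤ 0)
    (hx : ηd * pminus ≤ x) : min x 0 / ηd ∈ Set.Icc pminus 0 := by
  refine ⟨?_, div_nonpos_of_nonpos_of_nonneg (min_le_right x 0) hηd.le⟩
  rw [le_div_iff₀' hηd]
  exact le_min hx (mul_nonpos_of_nonneg_of_nonpos hηd.le hpminus)

/-- The per-interval power constraints on the charging/discharging split
`(P_c, P_d)` with complementarity are equivalent to the two inequalities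
`η_d·p⁻ ≤ x ≤ p⁺/η_c` on the grid-side power `x` alone. -/
theorem charge_discharge_split_iff
    (ηc ηd : ℝ) (hηc : ηc ∈ Set.Ioc (0 : ℝ) 1) (hηd : ηd ∈ Set.Ioc (0 : ℝ) 1)
    (pplus pminus : ℝ) (hpplus : 0 ≤ pplus) (hpminus : pminus ≤ 0) (x : ℝ) :
    (∃ Pc Pd : ℝ, 0 ≤ Pc ∧ Pc ≤ pplus ∧ pminus ≤ Pd ∧ Pd ≤ 0 ∧
        Pc * Pd = 0 ∧ x = Pc / ηc + ηd * Pd) ↔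
      ηd * pminus ≤ x ∧ x ≤ pplus / ηc := by
  constructor
  · rintro ⟨Pc, Pd, hPc₀, hPc₁, hPd₀, hPd₁, -, rfl⟩
    exact div_add_mul_mem_Icc hηc.1 hηd.1 ⟨hPc₀, hPc₁⟩ ⟨hPd₀, hPd₁⟩
  · rintro ⟨hlo, hhi⟩
    obtain ⟨hPc₀, hPc₁⟩ := mul_max_zero_mem_Icc hηc.1 hpplus hhi
    obtain ⟨hPd₀, hPd₁⟩ := min_zero_div_mem_Icc hηd.1 hpminus hlo
    have hcompl : ηc * max x 0 * (min x 0 / ηd) = 0 := by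
      linear_combination (ηc / ηd) * (max_mul_min x 0).trans (mul_zero x)
    refine ⟨_, _, hPc₀, hPc₁, hPd₀, hPd₁, hcompl, ?_⟩
    rw [mul_div_cancel_left₀ _ hηc.1.ne', mul_div_cancel₀ _ hηd.1.ne', max_add_min, add_zero]
end

section
/- Let η_c, η_d ∈ ℝ with 0 < η_c, 0 < η_d and η_c·η_d ≤ 1, and define the resource-side power function g(x) = η_c·max(x,0) + (1/η_d)·min(x,0). Then for all P ≥ 0, R ≥ 0, and s ∈ [−1, 1], g(P − s·R) ≥ η_c·P − R·((1 + η_c·η_d)·s + (1 − η_c·η_d))/(2·η_d). -/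
/-! When `η_c·η_d ≤ 1` the charging slope `η_c` is at most the discharging slope `1/η_d`, so
`g` is concave and equals `x ↦ min (η_c·x) (x/η_d)`. The bound is affine in `s`, and it suffices
to check that it lies below each of the two lines: both gaps are multiples of `1 - η_c·η_d`
with coefficients that are nonnegative for `P, R ≥ 0` and `s ∈ [-1, 1]`. -/

theorem mul_max_zero_add_mul_min_zero_eq_min {α : Type*} [CommRing α] [LinearOrder α]
    [IsStrictOrderedRing α] {a b : α} (hab : a ≤ b) (x : α) :
    a * max x 0 + b * min x 0 = min (a * x) (b * x) := by
  rcases le_total 0 x with hx | hx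
  · rw [max_eq_left hx, min_eq_right hx, min_eq_left (mul_le_mul_of_nonneg_right hab hx)]
    ring
  · rw [max_eq_right hx, min_eq_left hx, min_eq_right (mul_le_mul_of_nonpos_right hab hx)]
    ring

theorem resource_power_affine_lower_bound_nonneg_general
    (ηc ηd : ℝ) (hηd : 0 < ηd) (h : ηc * ηd ≤ 1)
    (g : ℝ → ℝ) (hg : ∀ x, g x = ηc * max x 0 + (1 / ηd) * min x 0)
    (P R s : ℝ) (hP : 0 ≤ P) (hR : 0 ≤ R) (hs : s ∈ Set.Icc (-1 : ℝ) 1) :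
    g (P - s * R) ≥
      ηc * P - R * ((1 + ηc * ηd) * s + (1 - ηc * ηd)) / (2 * ηd) := by
  obtain ⟨hs₁, hs₂⟩ := hs
  have hk : 0 ≤ 1 - ηc * ηd := sub_nonneg.2 h
  have hslopes : ηc ≤ 1 / ηd := (le_div_iff₀ hηd).2 h
  rw [hg, mul_max_zero_add_mul_min_zero_eq_min hslopes, ge_iff_le, le_min_iff]
  set L := ηc * P - R * ((1 + ηc * ηd) * s + (1 - ηc * ηd)) / (2 * ηd) with hL
  constructor
  · have hgap : ηc * (P - s * R) - L = R * (1 - ηc * ηd) * (1 + s) / (2 * ηd) := by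
      rw [hL]
      field_simp
      ring
    have hgap_nonneg : 0 ≤ R * (1 - ηc * ηd) * (1 + s) / (2 * ηd) :=
      div_nonneg (mul_nonneg (mul_nonneg hR hk) (by linarith)) (by positivity)
    linarith
  · have hgap : 1 / ηd * (P - s * R) - L
        = P * (1 - ηc * ηd) / ηd + R * (1 - ηc * ηd) * (1 - s) / (2 * ηd) := by
      rw [hL]
      field_simp
      ring
    have hgap_nonneg :
        0 ≤ P * (1 - ηc * ηd) / ηd + R * (1 - ηc * ηd) * (1 - s) / (2 * ηd) :=
      add_nonneg (div_nonneg (mul_nonneg hP hk) hηd.le)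
        (div_nonneg (mul_nonneg (mul_nonneg hR hk) (by linarith)) (by positivity))
    linarith

/-- Affine-in-`s` lower bound on the resource-side power for a nonnegative
grid-side baseline `P`: for `s ∈ [-1,1]` and `R ≥ 0`,
`g(P - s·R) ≥ η_c·P - R·((1+η_c·η_d)·s + (1-η_c·η_d))/(2·η_d)`. -/
theorem resource_power_affine_lower_bound_nonneg
    (ηc ηd : ℝ) (hηc : 0 < ηc) (hηd : 0 < ηd) (h : ηc * ηd ≤ 1)
    (g : ℝ → ℝ) (hg : ∀ x, g x = ηc * max x 0 + (1 / ηd) * min x 0)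
    (P R s : ℝ) (hP : 0 ≤ P) (hR : 0 ≤ R) (hs : s ∈ Set.Icc (-1 : ℝ) 1) :
    g (P - s * R) ≥
      ηc * P - R * ((1 + ηc * ηd) * s + (1 - ηc * ηd)) / (2 * ηd) :=
  resource_power_affine_lower_bound_nonneg_general ηc ηd hηd h g hg P R s hP hR hs
end

section
/- Let η_c, η_d ∈ ℝ with 0 < η_c, 0 < η_d and η_c·η_d ≤ 1, and define the resource-side power function g(x) = η_c·max(x,0) + (1/η_d)·min(x,0). Then for all P ≤ 0, R ≥ 0, and s ∈ [−1, 1], g(P − s·R) ≥ P/η_d − R·((1 + η_c·η_d)·s + (1 − η_c·η_d))/(2·η_d). -/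
theorem resource_power_affine_lower_bound_nonpos_general
    (ηc ηd : ℝ) (hηd : 0 < ηd) (h : ηc * ηd ≤ 1)
    (g : ℝ → ℝ) (hg : ∀ x, g x = ηc * max x 0 + (1 / ηd) * min x 0)
    (P R s : ℝ) (hP : P ≤ 0) (hR : 0 ≤ R) (hs : s ∈ Set.Icc (-1 : ℝ) 1) :
    g (P - s * R) ≥
      P / ηd - R * ((1 + ηc * ηd) * s + (1 - ηc * ηd)) / (2 * ηd) := by
  obtain ⟨hs₁, hs₂⟩ := hs
  have hloss : 0 ≤ 1 - ηc * ηd := sub_nonneg.2 h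
  have hηc : ηc ≤ 1 / ηd := (le_div_iff₀ hηd).2 h
  set bound := P / ηd - R * ((1 + ηc * ηd) * s + (1 - ηc * ηd)) / (2 * ηd) with hbound
  rw [hg, mul_max_zero_add_mul_min_zero_eq_min hηc, ge_iff_le, le_min_iff]
  constructor
  · have hcharge :
        ηc * (P - s * R) - bound = (1 - ηc * ηd) * (R * (1 + s) - 2 * P) / (2 * ηd) := by
      rw [hbound]
      field_simp
      ring
    rw [← sub_nonneg, hcharge]
    exact div_nonneg (mul_nonneg hloss (by nlinarith)) (by positivity)
  · have hdischarge : 1 / ηd * (P - s * R) - bound = (1 - ηc * ηd) * (R * (1 - s)) / (2 * ηd) := by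
      rw [hbound]
      field_simp
      ring
    rw [← sub_nonneg, hdischarge]
    exact div_nonneg (mul_nonneg hloss (mul_nonneg hR (by linarith))) (by positivity)

/-- Affine-in-`s` lower bound on the resource-side power for a nonpositive
grid-side baseline `P`: for `s ∈ [-1,1]` and `R ≥ 0`,
`g(P - s·R) ≥ P/η_d - R·((1+η_c·η_d)·s + (1-η_c·η_d))/(2·η_d)`. -/
theorem resource_power_affine_lower_bound_nonpos
    (ηc ηd : ℝ) (hηc : 0 < ηc) (hηd : 0 < ηd) (h : ηc * ηd ≤ 1)
    (g : ℝ → ℝ) (hg : ∀ x, g x = ηc * max x 0 + (1 / ηd) * min x 0)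
    (P R s : ℝ) (hP : P ≤ 0) (hR : 0 ≤ R) (hs : s ∈ Set.Icc (-1 : ℝ) 1) :
    g (P - s * R) ≥
      P / ηd - R * ((1 + ηc * ηd) * s + (1 - ηc * ηd)) / (2 * ηd) :=
  resource_power_affine_lower_bound_nonpos_general ηc ηd hηd h g hg P R s hP hR hs
end

section
/- (Proposition 2, case P ≥ 0, deterministic form.) Let n ≥ 1, Δd > 0, η_c, η_d ∈ (0,1], p⁺ ≥ 0, p⁻ ≤ 0, e⁻, e⁺, e₀ ∈ ℝ, P ≥ 0, R ≥ 0, and signals s : Fin n → [−1,1]; write s^a_d = (1/(d+1))·Σ_{κ≤d} s(κ) for the running average. Suppose for every d: (i) η_c·(P − s(d)·R) ≤ p⁺; (ii) −(P − s(d)·R)/η_d + p⁻ ≤ 0; (iii) −η_c·(d+1)·Δd·P + ((1+η_c·η_d)/(2η_d)·s^a_d + (1−η_c·η_d)/(2η_d))·(d+1)·Δd·R − e₀ + e⁻ ≤ 0; (iv) η_c·(d+1)·Δd·P − η_c·s^a_d·(d+1)·Δd·R + e₀ − e⁺ ≤ 0. Then there exist P_c, P_d : Fin n → ℝ such that for every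 d: P − s(d)·R = P_c(d)/η_c + η_d·P_d(d), 0 ≤ P_c(d) ≤ p⁺, p⁻ ≤ P_d(d) ≤ 0, P_c(d)·P_d(d) = 0, and e⁻ ≤ e₀ + Δd·Σ_{κ≤d}(P_c(κ) + P_d(κ)) ≤ e⁺. -/
/-!
Dispatch the grid-side power `g = P - s R` greedily: charge `ηc g⁺` when `g ≥ 0`, discharge
`g⁻ / ηd` when `g < 0`. Complementarity and the power limits (i), (ii) are then immediate. The net
resource-side power `q = ηc g⁺ + g⁻ / ηd` is concave in `s` and squeezed between two affine
functions of `s`: from above by `ηc (P - s R)` (conversion losses, `ηc ηd ≤ 1`), and from below, on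
`s ∈ [-1, 1]`, by `ηc P - ((1 + ηc ηd) s + (1 - ηc ηd)) R / (2 ηd)`, which agrees with `q` at
`s = -1` and, because `P ≥ 0`, lies below it at `s = 1`. Summing an affine function of `s` over the
intervals `κ ≤ d` only sees the running average `s^a_d`, so the cumulative energy bounds are
exactly (iii) and (iv).
-/

open Finset

noncomputable section

variable {ηc ηd g : ℝ}

def chargePower (ηc g : ℝ) : ℝ := ηc * max g 0

def dischargePower (ηd g : ℝ) : ℝ := min g 0 / ηd

theorem chargePower_div_add_mul_dischargePower (hηc : ηc ≠ 0) (hηd : ηd ≠ 0) :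
    chargePower ηc g / ηc + ηd * dischargePower ηd g = g := by
  rw [chargePower, dischargePower, mul_div_cancel_left₀ _ hηc, mul_div_cancel₀ _ hηd,
    max_add_min, add_zero]

theorem chargePower_nonneg (hηc : 0 ≤ ηc) : 0 ≤ chargePower ηc g :=
  mul_nonneg hηc (le_max_right g 0)

theorem chargePower_le {p : ℝ} (hηc : 0 ≤ ηc) (hg : ηc * g ≤ p) (hp : 0 ≤ p) :
    chargePower ηc g ≤ p := by
  rw [chargePower, mul_max_of_nonneg _ _ hηc, mul_zero]
  exact max_le hg hp

theorem dischargePower_nonpos (hηd : 0 ≤ ηd) : dischargePower ηd g ≤ 0 :=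
  div_nonpos_of_nonpos_of_nonneg (min_le_right g 0) hηd

theorem le_dischargePower {p : ℝ} (hηd : 0 ≤ ηd) (hg : p ≤ g / ηd) (hp : p ≤ 0) :
    p ≤ dischargePower ηd g := by
  rw [dischargePower, ← min_div_div_right hηd, zero_div]
  exact le_min hg hp

theorem chargePower_mul_dischargePower : chargePower ηc g * dischargePower ηd g = 0 := by
  rcases le_total g 0 with hg | hg
  · simp [chargePower, max_eq_right hg]
  · simp [dischargePower, min_eq_right hg]

theorem chargePower_add_dischargePower_le (hηd : 0 < ηd) (hηcηd : ηc * ηd ≤ 1) :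
    chargePower ηc g + dischargePower ηd g ≤ ηc * g := by
  have hmin : min g 0 ≤ 0 := min_le_right g 0
  have hloss : min g 0 / ηd ≤ ηc * min g 0 := by
    rw [div_le_iff₀ hηd]
    nlinarith [mul_nonpos_of_nonneg_of_nonpos (sub_nonneg.2 hηcηd) hmin]
  calc chargePower ηc g + dischargePower ηd g
      ≤ ηc * max g 0 + ηc * min g 0 := by rw [chargePower, dischargePower]; linarith
    _ = ηc * g := by rw [← mul_add, max_add_min, add_zero]

theorem le_chargePower_add_dischargePower {P R s : ℝ} (hηd : 0 < ηd)
    (hηcηd : ηc * ηd ≤ 1) (hP : 0 ≤ P) (hR : 0 ≤ R) (hs : s ∈ Set.Icc (-1 : ℝ) 1) :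
    ηc * P - ((1 + ηc * ηd) / (2 * ηd) * s + (1 - ηc * ηd) / (2 * ηd)) * R ≤
      chargePower ηc (P - s * R) + dischargePower ηd (P - s * R) := by
  obtain ⟨hs₁, hs₂⟩ := hs
  have hsplit : ((1 + ηc * ηd) / (2 * ηd) * s + (1 - ηc * ηd) / (2 * ηd)) * R =
      ηc * s * R + (1 - ηc * ηd) * (1 + s) * R / (2 * ηd) := by
    field_simp
    ring
  rw [hsplit]
  rcases le_total 0 (P - s * R) with hg | hg
  · have hgap : 0 ≤ (1 - ηc * ηd) * (1 + s) * R / (2 * ηd) := by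
      apply div_nonneg _ (by positivity)
      exact mul_nonneg (mul_nonneg (by linarith) (by linarith)) hR
    simp only [chargePower, dischargePower, max_eq_left hg, min_eq_right hg, zero_div]
    linarith
  · simp only [chargePower, dischargePower, max_eq_right hg, min_eq_left hg, mul_zero,
      zero_add]
    rw [le_div_iff₀ hηd]
    have hexpand : (ηc * P - (ηc * s * R + (1 - ηc * ηd) * (1 + s) * R / (2 * ηd))) * ηd =
        ηc * ηd * P - ηc * ηd * s * R - (1 - ηc * ηd) * (1 + s) * R / 2 := by
      field_simp
      ring
    rw [hexpand]
    nlinarith [mul_nonneg (sub_nonneg.2 hηcηd) hP,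
      mul_nonneg (mul_nonneg (sub_nonneg.2 hηcηd) (sub_nonneg.2 hs₂)) hR]

theorem Finset.sum_add_mul_eq_card_mul {ι R : Type*} [CommSemiring R] {S : Finset ι} {s : ι → R}
    {m : R} (hm : ∑ i ∈ S, s i = #S * m) (α β : R) :
    ∑ i ∈ S, (α + β * s i) = #S * (α + β * m) := by
  rw [sum_add_distrib, sum_const, nsmul_eq_mul, ← mul_sum, hm]
  ring

end

theorem prop2_safe_approx_nonneg_general
    (n : ℕ) (Δd : ℝ) (hΔd : 0 < Δd)
    (ηc ηd : ℝ) (hηc : ηc ∈ Set.Ioc (0 : ℝ) 1) (hηd : ηd ∈ Set.Ioc (0 : ℝ) 1)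
    (pplus pminus : ℝ) (hpplus : 0 ≤ pplus) (hpminus : pminus ≤ 0)
    (eminus eplus e₀ : ℝ) (P R : ℝ) (hP : 0 ≤ P) (hR : 0 ≤ R)
    (s : Fin n → ℝ) (hs : ∀ d, s d ∈ Set.Icc (-1 : ℝ) 1)
    (sa : Fin n → ℝ)
    (hsa : ∀ d : Fin n, sa d = (1 / ((d : ℕ) + 1 : ℝ)) * ∑ κ ∈ Iic d, s κ)
    (h1 : ∀ d : Fin n, ηc * (P - s d * R) ≤ pplus)
    (h2 : ∀ d : Fin n, -(P - s d * R) / ηd + pminus ≤ 0)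
    (h3 : ∀ d : Fin n,
      -ηc * (((d : ℕ) + 1 : ℝ)) * Δd * P +
        ((1 + ηc * ηd) / (2 * ηd) * sa d + (1 - ηc * ηd) / (2 * ηd)) *
          (((d : ℕ) + 1 : ℝ)) * Δd * R - e₀ + eminus ≤ 0)
    (h4 : ∀ d : Fin n,
      ηc * (((d : ℕ) + 1 : ℝ)) * Δd * P -
        ηc * sa d * (((d : ℕ) + 1 : ℝ)) * Δd * R + e₀ - eplus ≤ 0) :
    ∃ Pc Pd : Fin n → ℝ, ∀ d : Fin n,
      P - s d * R = Pc d / ηc + ηd * Pd d ∧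
      0 ≤ Pc d ∧ Pc d ≤ pplus ∧ pminus ≤ Pd d ∧ Pd d ≤ 0 ∧
      Pc d * Pd d = 0 ∧
      eminus ≤ e₀ + Δd * ∑ κ ∈ Iic d, (Pc κ + Pd κ) ∧
      e₀ + Δd * ∑ κ ∈ Iic d, (Pc κ + Pd κ) ≤ eplus := by
  obtain ⟨hηc₀, hηc₁⟩ := hηc
  obtain ⟨hηd₀, hηd₁⟩ := hηd
  have hηcηd : ηc * ηd ≤ 1 := mul_le_one₀ hηc₁ hηd₀.le hηd₁
  refine ⟨fun d ↦ chargePower ηc (P - s d * R), fun d ↦ dischargePower ηd (P - s d * R),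
    fun d ↦ ?_⟩
  have hcard : (#(Iic d) : ℝ) = (d : ℕ) + 1 := by rw [Fin.card_Iic]; push_cast; rfl
  have hsum : ∑ κ ∈ Iic d, s κ = #(Iic d) * sa d := by
    rw [hcard, hsa d]
    field_simp
  set a := (1 + ηc * ηd) / (2 * ηd)
  set b := (1 - ηc * ηd) / (2 * ηd)
  have hlower : (#(Iic d) : ℝ) * ((ηc * P - b * R) + (-(a * R)) * sa d) ≤
      ∑ κ ∈ Iic d, (chargePower ηc (P - s κ * R) + dischargePower ηd (P - s κ * R)) := by
    rw [← sum_add_mul_eq_card_mul hsum]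
    refine sum_le_sum fun κ _ ↦ ?_
    linarith [le_chargePower_add_dischargePower hηd₀ hηcηd hP hR (hs κ)]
  have hupper : ∑ κ ∈ Iic d, (chargePower ηc (P - s κ * R) + dischargePower ηd (P - s κ * R)) ≤
      (#(Iic d) : ℝ) * (ηc * P + (-(ηc * R)) * sa d) := by
    rw [← sum_add_mul_eq_card_mul hsum]
    refine sum_le_sum fun κ _ ↦ ?_
    linarith [chargePower_add_dischargePower_le (g := P - s κ * R) hηd₀ hηcηd]
  rw [hcard] at hlower hupper
  refine ⟨(chargePower_div_add_mul_dischargePower hηc₀.ne' hηd₀.ne').symm,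
    chargePower_nonneg hηc₀.le, chargePower_le hηc₀.le (h1 d) hpplus,
    le_dischargePower hηd₀.le (by linarith [neg_div ηd (P - s d * R), h2 d]) hpminus,
    dischargePower_nonpos hηd₀.le, chargePower_mul_dischargePower, ?_, ?_⟩
  · linarith [h3 d, mul_le_mul_of_nonneg_left hlower hΔd.le]
  · linarith [h4 d, mul_le_mul_of_nonneg_left hupper hΔd.le]

/-- Proposition 2 (case `P ≥ 0`, deterministic form): the eliminated
constraints (26)–(29) are a safe approximation of the original per-interval
power, complementarity and cumulative-energy constraints (16)–(22). -/
theorem prop2_safe_approx_nonneg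
    (n : ℕ) (hn : 1 ≤ n) (Δd : ℝ) (hΔd : 0 < Δd)
    (ηc ηd : ℝ) (hηc : ηc ∈ Set.Ioc (0 : ℝ) 1) (hηd : ηd ∈ Set.Ioc (0 : ℝ) 1)
    (pplus pminus : ℝ) (hpplus : 0 ≤ pplus) (hpminus : pminus ≤ 0)
    (eminus eplus e₀ : ℝ) (P R : ℝ) (hP : 0 ≤ P) (hR : 0 ≤ R)
    (s : Fin n → ℝ) (hs : ∀ d, s d ∈ Set.Icc (-1 : ℝ) 1)
    (sa : Fin n → ℝ)
    (hsa : ∀ d : Fin n, sa d = (1 / ((d : ℕ) + 1 : ℝ)) * ∑ κ ∈ Iic d, s κ)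
    (h1 : ∀ d : Fin n, ηc * (P - s d * R) ≤ pplus)
    (h2 : ∀ d : Fin n, -(P - s d * R) / ηd + pminus ≤ 0)
    (h3 : ∀ d : Fin n,
      -ηc * (((d : ℕ) + 1 : ℝ)) * Δd * P +
        ((1 + ηc * ηd) / (2 * ηd) * sa d + (1 - ηc * ηd) / (2 * ηd)) *
          (((d : ℕ) + 1 : ℝ)) * Δd * R - e₀ + eminus ≤ 0)
    (h4 : ∀ d : Fin n,
      ηc * (((d : ℕ) + 1 : ℝ)) * Δd * P -
        ηc * sa d * (((d : ℕ) + 1 : ℝ)) * Δd * R + e₀ - eplus ≤ 0) :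
    ∃ Pc Pd : Fin n → ℝ, ∀ d : Fin n,
      P - s d * R = Pc d / ηc + ηd * Pd d ∧
      0 ≤ Pc d ∧ Pc d ≤ pplus ∧ pminus ≤ Pd d ∧ Pd d ≤ 0 ∧
      Pc d * Pd d = 0 ∧
      eminus ≤ e₀ + Δd * ∑ κ ∈ Iic d, (Pc κ + Pd κ) ∧
      e₀ + Δd * ∑ κ ∈ Iic d, (Pc κ + Pd κ) ≤ eplus :=
  prop2_safe_approx_nonneg_general n Δd hΔd ηc ηd hηc hηd pplus pminus hpplus hpminus eminus eplus
    e₀ P R hP hR s hs sa hsa h1 h2 h3 h4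
end

section
/- Let ι be a finite type and p, q : ι → ℝ probability vectors (p_i, q_i ≥ 0 for all i, Σ_i p_i = Σ_i q_i = 1) with q_i > 0 for all i. Then for every subset A ⊆ ι, (Σ_{i∈A} p_i − Σ_{i∈A} q_i)² ≤ (Σ_i q_i·(p_i/q_i − 1)²) · (Σ_{i∈A} q_i) · (1 − Σ_{i∈A} q_i). -/
/-!
Since `∑ (pᵢ - qᵢ) = 0`, the deviation `p(A) - q(A)` is the `q`-covariance of the likelihood
ratio `p/q - 1` with the indicator `1_A`, i.e. `∑ qᵢ (pᵢ/qᵢ - 1)(1_A(i) - q(A))`. Weighted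
Cauchy–Schwarz bounds its square by the χ²-divergence times the `q`-variance of `1_A`, which is
`q(A)(1 - q(A))`.
-/

open Finset

theorem Finset.sq_sum_mul_mul_le {ι R : Type*} [CommSemiring R] [LinearOrder R]
    [IsStrictOrderedRing R] [ExistsAddOfLE R] (s : Finset ι) (w f g : ι → R)
    (hw : ∀ i ∈ s, 0 ≤ w i) :
    (∑ i ∈ s, w i * f i * g i) ^ 2 ≤ (∑ i ∈ s, w i * f i ^ 2) * ∑ i ∈ s, w i * g i ^ 2 :=
  sum_sq_le_sum_mul_sum_of_sq_le_mul s
    (fun i hi => mul_nonneg (hw i hi) (sq_nonneg _))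
    (fun i hi => mul_nonneg (hw i hi) (sq_nonneg _))
    fun _ _ => le_of_eq (by ring)

section Indicator

variable {ι : Type*} [Fintype ι]

theorem sum_mul_indicator_one_sub (A : Finset ι) (f : ι → ℝ) (c : ℝ) :
    ∑ i, f i * ((A : Set ι).indicator 1 i - c) = ∑ i ∈ A, f i - c * ∑ i, f i := by
  simp only [mul_sub, sum_sub_distrib, ← Set.indicator_mul_right, Pi.one_apply, mul_one,
    Finset.sum_indicator_subset _ (subset_univ A), mul_comm c, sum_mul]

theorem sum_mul_indicator_one_sub_sq (A : Finset ι) {w : ι → ℝ} (hw : ∑ i, w i = 1) :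
    ∑ i, w i * ((A : Set ι).indicator 1 i - ∑ j ∈ A, w j) ^ 2 =
      (∑ i ∈ A, w i) * (1 - ∑ i ∈ A, w i) := by
  set t := ∑ j ∈ A, w j
  have hsq (i : ι) : ((A : Set ι).indicator 1 i - t) ^ 2 =
      ((A : Set ι).indicator 1 i - t) * (1 - 2 * t) + t * (1 - t) := by
    by_cases hi : i ∈ (A : Set ι) <;>
      simp only [hi, Set.indicator_of_mem, Set.indicator_of_notMem, not_false_eq_true,
        Pi.one_apply] <;> ring
  simp only [hsq, mul_add, sum_add_distrib, ← mul_assoc, sum_mul_indicator_one_sub, hw,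
    ← sum_mul]
  ring

end Indicator

theorem chi_sq_event_probability_bound_general
    {ι : Type*} [Fintype ι] (p q : ι → ℝ)
    (hq : ∀ i, 0 < q i)
    (hp1 : ∑ i, p i = 1) (hq1 : ∑ i, q i = 1) (A : Finset ι) :
    (∑ i ∈ A, p i - ∑ i ∈ A, q i) ^ 2 ≤
      (∑ i, q i * (p i / q i - 1) ^ 2) * (∑ i ∈ A, q i) *
        (1 - ∑ i ∈ A, q i) := by
  set t := ∑ i ∈ A, q i
  have hcov : ∑ i, q i * (p i / q i - 1) * ((A : Set ι).indicator 1 i - t) =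
      ∑ i ∈ A, p i - t := by
    have hlr (i : ι) : q i * (p i / q i - 1) = p i - q i := by
      field_simp [(hq i).ne']
    simp only [hlr, sum_mul_indicator_one_sub, sum_sub_distrib, hp1, hq1]
    ring
  calc (∑ i ∈ A, p i - t) ^ 2
      = (∑ i, q i * (p i / q i - 1) * ((A : Set ι).indicator 1 i - t)) ^ 2 := by rw [hcov]
    _ ≤ (∑ i, q i * (p i / q i - 1) ^ 2) * ∑ i, q i * ((A : Set ι).indicator 1 i - t) ^ 2 :=
        sq_sum_mul_mul_le _ _ _ _ fun i _ => (hq i).le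
    _ = (∑ i, q i * (p i / q i - 1) ^ 2) * t * (1 - t) := by
        rw [sum_mul_indicator_one_sub_sq A hq1, mul_assoc]

/-- χ²-divergence bound on deviation of event probabilities:
`(p(A) - q(A))² ≤ I_φ(p,q) · q(A) · (1 - q(A))`. -/
theorem chi_sq_event_probability_bound
    {ι : Type*} [Fintype ι] (p q : ι → ℝ)
    (hp : ∀ i, 0 ≤ p i) (hq : ∀ i, 0 < q i)
    (hp1 : ∑ i, p i = 1) (hq1 : ∑ i, q i = 1) (A : Finset ι) :
    (∑ i ∈ A, p i - ∑ i ∈ A, q i) ^ 2 ≤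
      (∑ i, q i * (p i / q i - 1) ^ 2) * (∑ i ∈ A, q i) *
        (1 - ∑ i ∈ A, q i) :=
  chi_sq_event_probability_bound_general p q hq hp1 hq1 A
end

section
/- (Adjusted tolerance for the χ²-divergence ball.) Let ε ∈ (0, 1/2] and ρ > 0, and define ε' = ε − (√(ρ² + 4ρ(ε − ε²)) − (1 − 2ε)·ρ)/(2ρ + 2). Then (a) 0 ≤ ε' ≤ ε, and (b) for every a ∈ [0, ε'], a + √(ρ·a·(1 − a)) ≤ ε. -/
/-!
The number `ε'` is the smaller root of
`(1 + ρ) a² - (ρ + 2ε) a + ε² = (ε - a)² - ρ a (1 - a)`.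
This quadratic is nonpositive at `a = ε`, so `ε' ≤ ε`, and it is nonnegative left of its smaller
root, so every `a ∈ [0, ε']` satisfies `ρ a (1 - a) ≤ (ε - a)²`; taking square roots
(`ε - a ≥ 0`) gives `a + √(ρ a (1 - a)) ≤ ε`.
-/

noncomputable def quadraticSmallerRoot (a b c : ℝ) : ℝ :=
  (-b - √(discrim a b c)) / (2 * a)

section QuadraticSmallerRoot

variable {a b c : ℝ}

theorem quadraticSmallerRoot_nonneg (ha : 0 < a) (hb : b ≤ 0) (hc : 0 ≤ c) :
    0 ≤ quadraticSmallerRoot a b c := by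
  have hsqrt : √(discrim a b c) ≤ -b :=
    (Real.sqrt_le_left (neg_nonneg.2 hb)).2 (by rw [discrim]; nlinarith [mul_nonneg ha.le hc])
  exact div_nonneg (by linarith) (by linarith)

theorem quadraticSmallerRoot_le_of_nonpos (ha : 0 < a) {x : ℝ}
    (hx : a * (x * x) + b * x + c ≤ 0) : quadraticSmallerRoot a b c ≤ x := by
  have hsq : (2 * a * x + b) ^ 2 ≤ discrim a b c := by
    rw [discrim]; nlinarith
  have habs := neg_abs_le (2 * a * x + b)
  have hle := Real.abs_le_sqrt hsq
  rw [quadraticSmallerRoot, div_le_iff₀ (by linarith)]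
  linarith

theorem quadratic_nonneg_of_le_quadraticSmallerRoot (ha : 0 < a) (hd : 0 ≤ discrim a b c)
    {x : ℝ} (hx : x ≤ quadraticSmallerRoot a b c) : 0 ≤ a * (x * x) + b * x + c := by
  rw [quadraticSmallerRoot, le_div_iff₀ (by linarith)] at hx
  have hsqrt := Real.sq_sqrt hd
  -- `2ax + b ≤ -√Δ ≤ 0`, hence `4a (ax² + bx + c) = (2ax + b)² - Δ ≥ 0`
  have hsq : discrim a b c ≤ (2 * a * x + b) ^ 2 := by
    nlinarith [Real.sqrt_nonneg (discrim a b c)]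
  rw [discrim] at hsq
  nlinarith

end QuadraticSmallerRoot

/-- Adjusted tolerance for the χ²-divergence ball: with
`ε' = ε - (√(ρ² + 4ρ(ε - ε²)) - (1 - 2ε)·ρ)/(2ρ + 2)`, we have
(a) `0 ≤ ε' ≤ ε`, and (b) `a + √(ρ·a·(1-a)) ≤ ε` for all `a ∈ [0, ε']`. -/
theorem adjusted_tolerance_chi_sq
    (ε ρ : ℝ) (hε : ε ∈ Set.Ioc (0 : ℝ) (1 / 2)) (hρ : 0 < ρ)
    (ε' : ℝ)
    (hε' : ε' = ε - (Real.sqrt (ρ ^ 2 + 4 * ρ * (ε - ε ^ 2)) -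
      (1 - 2 * ε) * ρ) / (2 * ρ + 2)) :
    (0 ≤ ε' ∧ ε' ≤ ε) ∧
      ∀ a ∈ Set.Icc (0 : ℝ) ε', a + Real.sqrt (ρ * a * (1 - a)) ≤ ε := by
  obtain ⟨hε0, hε_half⟩ := hε
  have hA : 0 < 1 + ρ := by linarith
  have hvar : 0 ≤ ε * (1 - ε) := mul_nonneg hε0.le (by linarith)
  have hdisc : discrim (1 + ρ) (-(ρ + 2 * ε)) (ε ^ 2) = ρ ^ 2 + 4 * ρ * (ε - ε ^ 2) := by
    rw [discrim]; ring
  have hε'_root : ε' = quadraticSmallerRoot (1 + ρ) (-(ρ + 2 * ε)) (ε ^ 2) := by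
    rw [hε', quadraticSmallerRoot, hdisc]; field_simp; ring
  have hq (x : ℝ) :
      (1 + ρ) * (x * x) + -(ρ + 2 * ε) * x + ε ^ 2 = (ε - x) ^ 2 - ρ * x * (1 - x) := by ring
  have hε'_le : ε' ≤ ε := hε'_root ▸ quadraticSmallerRoot_le_of_nonpos hA (by
    rw [hq]; nlinarith [mul_nonneg hρ.le hvar])
  refine ⟨⟨hε'_root ▸ quadraticSmallerRoot_nonneg hA (by linarith) (sq_nonneg ε), hε'_le⟩, ?_⟩
  rintro a ⟨-, ha⟩
  have hqa := quadratic_nonneg_of_le_quadraticSmallerRoot hA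
    (by rw [hdisc]; nlinarith [mul_nonneg hρ.le hvar]) (hε'_root ▸ ha)
  rw [hq] at hqa
  have hsqrt : √(ρ * a * (1 - a)) ≤ ε - a := (Real.sqrt_le_left (by linarith)).2 (by linarith)
  linarith
end

section
/- (Data-driven distributionally robust chance constraint over a χ²-divergence ball, discrete form.) Let ι be a finite type and p, q : ι → ℝ probability vectors (p_i, q_i ≥ 0 for all i, Σ_i p_i = Σ_i q_i = 1) with q_i > 0 for all i. Let ε ∈ (0, 1/2], ρ > 0, and define ε' = ε − (√(ρ² + 4ρ(ε − ε²)) − (1 − 2ε)·ρ)/(2ρ + 2). If Σ_i q_i·(p_i/q_i − 1)² ≤ ρ and Σ_{i∈A} q_i ≥ 1 − ε' for a subset A ⊆ ι, then Σ_{i∈A} p_i ≥ 1 − ε. -/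
/-!
By Cauchy–Schwarz on `A` and on its complement, `(p(A) - q(A))² ≤ χ²(p, q) · q(A) (1 - q(A))`.
Writing `u = 1 - q(A)`, it therefore suffices that `ρ u (1 - u) ≤ (ε - u)²`, i.e. that the
quadratic `(1 + ρ) u² - (2ε + ρ) u + ε²` is nonnegative at `u`; its discriminant is
`ρ² + 4ρ(ε - ε²)` and its smaller root is exactly `ε'`, so this holds whenever `u ≤ ε'`.
-/

open Finset

theorem quadratic_nonneg_of_le_smaller_root {a b c x : ℝ} (ha : 0 < a)
    (hD : 0 ≤ discrim a b c) (hx : x ≤ (-b - √(discrim a b c)) / (2 * a)) :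
    0 ≤ a * (x * x) + b * x + c := by
  set s := √(discrim a b c)
  have hs : s * s = b ^ 2 - 4 * a * c := Real.mul_self_sqrt hD
  have hfactor : a * (x * x) + b * x + c =
      a * (x - (-b - s) / (2 * a)) * (x - (-b + s) / (2 * a)) := by
    field_simp
    linear_combination hs
  have hroots : (-b - s) / (2 * a) ≤ (-b + s) / (2 * a) := by
    gcongr
    linarith [Real.sqrt_nonneg (discrim a b c)]
  rw [hfactor]
  exact mul_nonneg_of_nonpos_of_nonpos
    (mul_nonpos_of_nonneg_of_nonpos ha.le (by linarith)) (by linarith)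

section ChiSquare

variable {ι : Type*}

noncomputable def chiSqDiv [Fintype ι] (p q : ι → ℝ) : ℝ := ∑ i, q i * (p i / q i - 1) ^ 2

theorem chiSqDiv_eq_sum_sq_sub_div [Fintype ι] {p q : ι → ℝ} (hq : ∀ i, q i ≠ 0) :
    chiSqDiv p q = ∑ i, (p i - q i) ^ 2 / q i := by
  refine sum_congr rfl fun i _ => ?_
  field_simp [hq i]

theorem sq_sum_sub_le_sum_mul_sum_sq_sub_div (s : Finset ι) {p q : ι → ℝ}
    (hq : ∀ i ∈ s, 0 < q i) :
    (∑ i ∈ s, (p i - q i)) ^ 2 ≤ (∑ i ∈ s, q i) * ∑ i ∈ s, (p i - q i) ^ 2 / q i :=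
  sum_sq_le_sum_mul_sum_of_sq_le_mul s (fun i hi => (hq i hi).le)
    (fun i hi => div_nonneg (sq_nonneg _) (hq i hi).le)
    (fun i hi => (mul_div_cancel₀ _ (hq i hi).ne').ge)

theorem sq_sum_sub_sum_le_chiSqDiv_mul [Fintype ι] {p q : ι → ℝ} (hq : ∀ i, 0 < q i)
    (hp1 : ∑ i, p i = 1) (hq1 : ∑ i, q i = 1) (A : Finset ι) :
    (∑ i ∈ A, p i - ∑ i ∈ A, q i) ^ 2 ≤
      chiSqDiv p q * ((∑ i ∈ A, q i) * (1 - ∑ i ∈ A, q i)) := by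
  classical
  have hin := sq_sum_sub_le_sum_mul_sum_sq_sub_div A (p := p) (fun i _ => hq i)
  have hout := sq_sum_sub_le_sum_mul_sum_sq_sub_div Aᶜ (p := p) (fun i _ => hq i)
  have hpc : ∑ i ∈ Aᶜ, p i = 1 - ∑ i ∈ A, p i := by
    rw [← hp1, ← sum_compl_add_sum A p, add_sub_cancel_right]
  have hqc : ∑ i ∈ Aᶜ, q i = 1 - ∑ i ∈ A, q i := by
    rw [← hq1, ← sum_compl_add_sum A q, add_sub_cancel_right]
  rw [sum_sub_distrib] at hin hout
  rw [hpc, hqc] at hout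
  rw [chiSqDiv_eq_sum_sq_sub_div fun i => (hq i).ne', ← sum_compl_add_sum A]
  have hqA : 0 ≤ ∑ i ∈ A, q i := sum_nonneg fun i _ => (hq i).le
  have hqAc : 0 ≤ 1 - ∑ i ∈ A, q i := hqc ▸ sum_nonneg fun i _ => (hq i).le
  -- weight the bound on `A` by `q(Aᶜ)`, the one on `Aᶜ` by `q(A)`, and add
  linear_combination mul_le_mul_of_nonneg_left hin hqAc + mul_le_mul_of_nonneg_left hout hqA

end ChiSquare

section AdjustedTolerance

noncomputable def adjustedTolerance (ε ρ : ℝ) : ℝ :=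
  ε - (√(ρ ^ 2 + 4 * ρ * (ε - ε ^ 2)) - (1 - 2 * ε) * ρ) / (2 * ρ + 2)

variable {ε ρ : ℝ}

theorem discrim_adjustedTolerance_quadratic :
    discrim (1 + ρ) (-(2 * ε + ρ)) (ε ^ 2) = ρ ^ 2 + 4 * ρ * (ε - ε ^ 2) := by
  rw [discrim]; ring

theorem adjustedTolerance_eq_smaller_root (hρ : 0 ≤ ρ) :
    adjustedTolerance ε ρ =
      (-(-(2 * ε + ρ)) - √(discrim (1 + ρ) (-(2 * ε + ρ)) (ε ^ 2))) / (2 * (1 + ρ)) := by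
  rw [adjustedTolerance, discrim_adjustedTolerance_quadratic]
  field_simp
  ring

theorem adjustedTolerance_le (hρ : 0 ≤ ρ) (hε0 : 0 ≤ ε) (hε1 : ε ≤ 1) :
    adjustedTolerance ε ρ ≤ ε := by
  have hsqrt : (1 - 2 * ε) * ρ ≤ √(ρ ^ 2 + 4 * ρ * (ε - ε ^ 2)) :=
    (le_abs_self _).trans <| Real.abs_le_sqrt <| by nlinarith [mul_nonneg hε0 (sub_nonneg.2 hε1)]
  rw [adjustedTolerance, sub_le_self_iff]
  exact div_nonneg (sub_nonneg.2 hsqrt) (by linarith)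

theorem mul_le_sq_of_one_sub_adjustedTolerance_le (hρ : 0 ≤ ρ) (hε0 : 0 ≤ ε) (hε1 : ε ≤ 1)
    {t : ℝ} (ht : 1 - adjustedTolerance ε ρ ≤ t) :
    ρ * (t * (1 - t)) ≤ (t - (1 - ε)) ^ 2 := by
  have hD : 0 ≤ discrim (1 + ρ) (-(2 * ε + ρ)) (ε ^ 2) := by
    rw [discrim_adjustedTolerance_quadratic]; nlinarith [mul_nonneg hε0 (sub_nonneg.2 hε1)]
  have h := quadratic_nonneg_of_le_smaller_root (by linarith) hD
    (x := 1 - t) (by rw [← adjustedTolerance_eq_smaller_root hρ]; linarith)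
  linear_combination h

end AdjustedTolerance

theorem chi_sq_ball_chance_constraint_general
    {ι : Type*} [Fintype ι] (p q : ι → ℝ)
    (hq : ∀ i, 0 < q i)
    (hp1 : ∑ i, p i = 1) (hq1 : ∑ i, q i = 1)
    (ε ρ : ℝ) (hε : ε ∈ Set.Ioc (0 : ℝ) (1 / 2)) (hρ : 0 < ρ)
    (ε' : ℝ)
    (hε' : ε' = ε - (Real.sqrt (ρ ^ 2 + 4 * ρ * (ε - ε ^ 2)) -
      (1 - 2 * ε) * ρ) / (2 * ρ + 2))
    (A : Finset ι)
    (hdiv : ∑ i, q i * (p i / q i - 1) ^ 2 ≤ ρ)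
    (hA : 1 - ε' ≤ ∑ i ∈ A, q i) :
    1 - ε ≤ ∑ i ∈ A, p i := by
  obtain ⟨hε0, hε12⟩ := hε
  have hε1 : ε ≤ 1 := by linarith
  rw [← adjustedTolerance] at hε'
  subst hε'
  have hqA : 0 ≤ (∑ i ∈ A, q i) * (1 - ∑ i ∈ A, q i) :=
    mul_nonneg (sum_nonneg fun i _ => (hq i).le)
      (sub_nonneg.2 (hq1 ▸ sum_le_univ_sum_of_nonneg fun i => (hq i).le))
  have hdev : (∑ i ∈ A, p i - ∑ i ∈ A, q i) ^ 2 ≤ (∑ i ∈ A, q i - (1 - ε)) ^ 2 :=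
    (sq_sum_sub_sum_le_chiSqDiv_mul hq hp1 hq1 A).trans <|
      (mul_le_mul_of_nonneg_right hdiv hqA).trans <|
        mul_le_sq_of_one_sub_adjustedTolerance_le hρ.le hε0.le hε1 hA
  have hgap : 0 ≤ ∑ i ∈ A, q i - (1 - ε) := by
    linarith [adjustedTolerance_le hρ.le hε0.le hε1]
  linarith [(abs_le_of_sq_le_sq' hdev hgap).1]

/-- Data-driven distributionally robust chance constraint over a χ²-divergence
ball (discrete form): if `I_φ(p,q) ≤ ρ` and `q(A) ≥ 1 - ε'`, then
`p(A) ≥ 1 - ε`, where `ε'` is the adjusted tolerance of Proposition 3. -/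
theorem chi_sq_ball_chance_constraint
    {ι : Type*} [Fintype ι] (p q : ι → ℝ)
    (hp : ∀ i, 0 ≤ p i) (hq : ∀ i, 0 < q i)
    (hp1 : ∑ i, p i = 1) (hq1 : ∑ i, q i = 1)
    (ε ρ : ℝ) (hε : ε ∈ Set.Ioc (0 : ℝ) (1 / 2)) (hρ : 0 < ρ)
    (ε' : ℝ)
    (hε' : ε' = ε - (Real.sqrt (ρ ^ 2 + 4 * ρ * (ε - ε ^ 2)) -
      (1 - 2 * ε) * ρ) / (2 * ρ + 2))
    (A : Finset ι)
    (hdiv : ∑ i, q i * (p i / q i - 1) ^ 2 ≤ ρ)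
    (hA : 1 - ε' ≤ ∑ i ∈ A, q i) :
    1 - ε ≤ ∑ i ∈ A, p i :=
  chi_sq_ball_chance_constraint_general p q hq hp1 hq1 ε ρ hε hρ ε' hε' A hdiv hA
end
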